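/- arXiv:2205.07488 — 2 statements merged into one kernel-verified Lean document; each statement's English description precedes it below -/
import Mathlib

section
/- Fix d ≥ 1, 1 ≤ s ≤ d, n ≥ 1, ε ∈ (0, 1/3], and γ > 0. Let Θ := { θ ∈ {−1/√s, 0, 1/√s}^d : θ has exactly s nonzero coordinates }, and for θ ∈ Θ define the density q_θ(x) := (1−ε)·φ_{γθ, I}(x) + ε·φ_{−((1−ε)/ε)γθ, I}(x) on ℝ^d. Let Q(x₁,…,x_n) := (1/|Θ|) ∑_{θ∈Θ} ∏_{i=1}^n q_θ(x_i) on (ℝ^d)^n. Then ∫_{(ℝ^d)^n} Q(x₁,…,x_n)² / ∏_{i=1}^n φ_{0,I}(x_i) dx₁⋯dx_n ≤ (1/|Θ|²) ∑_{θ,θ'∈Θ} exp( n γ⁴ ⟨θ,θ'⟩² / ε⁴ ). -/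
/-!
Expanding the square and integrating over the `n` independent samples turns the left side into
the average over pairs `(σ, σ')` of `(∫ q_σ q_σ' / φ₀)^n`. Since
`φ_a φ_b / φ₀ = e^{⟨a, b⟩} φ_{a+b}`, the inner integral is `E exp(t X X')` with
`t = γ² ⟨θ_σ, θ_σ'⟩` and `X, X'` independent copies of the centred two-point law
`(1 - ε) δ_1 + ε δ_{-(1-ε)/ε}`. By Hoeffding's lemma `E e^{yX} ≤ e^{y²/(2ε²)}`, and `|X| ≤ 1/ε`,
so conditioning on `X` gives `E exp(t X X') ≤ e^{t²/(2ε⁴)}`.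
-/

open MeasureTheory Real

/-- The Gaussian density `φ_{μ,I}` on `ℝ^d` with identity covariance. -/
noncomputable def gaussI {d : ℕ} (μ : Fin d → ℝ) (x : Fin d → ℝ) : ℝ :=
  (2 * π) ^ (-(d : ℝ) / 2) * Real.exp (-(1 / 2) * ∑ i, (x i - μ i) ^ 2)

open ProbabilityTheory

section Tensorization

variable {α ι κ : Type*} [Fintype κ] (c : ℝ) (S : Finset ι) (p : ι → α → ℝ) (r : α → ℝ)

lemma sq_sum_prod_div_prod_eq (x : κ → α) :
    (c * ∑ σ ∈ S, ∏ i, p σ (x i)) ^ 2 / ∏ i, r (x i) =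
      c ^ 2 * ∑ σ ∈ S, ∑ σ' ∈ S, ∏ i, (p σ (x i) * p σ' (x i) / r (x i)) := by
  simp_rw [Finset.prod_div_distrib, Finset.prod_mul_distrib, ← Finset.sum_div,
    ← Finset.sum_mul_sum, mul_pow, sq, mul_div_assoc]

lemma integral_sq_sum_prod_div_prod [MeasureSpace α] [SigmaFinite (volume : Measure α)]
    (hp : ∀ σ ∈ S, ∀ σ' ∈ S, Integrable fun y => p σ y * p σ' y / r y) :
    ∫ x : κ → α, (c * ∑ σ ∈ S, ∏ i, p σ (x i)) ^ 2 / ∏ i, r (x i) =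
      c ^ 2 * ∑ σ ∈ S, ∑ σ' ∈ S, (∫ y, p σ y * p σ' y / r y) ^ Fintype.card κ := by
  have hprod : ∀ σ ∈ S, ∀ σ' ∈ S, Integrable fun x : κ → α =>
      ∏ i, (p σ (x i) * p σ' (x i) / r (x i)) :=
    fun σ hσ σ' hσ' => Integrable.fintype_prod fun _ => hp σ hσ σ' hσ'
  simp_rw [sq_sum_prod_div_prod_eq]
  rw [integral_const_mul, integral_finsetSum _ fun σ hσ =>
    integrable_finsetSum _ fun σ' hσ' => hprod σ hσ σ' hσ']
  congr 1
  refine Finset.sum_congr rfl fun σ hσ => ?_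
  rw [integral_finsetSum _ fun σ' hσ' => hprod σ hσ σ' hσ']
  exact Finset.sum_congr rfl fun σ' _ => by
    rw [volume_pi]; exact integral_fintype_prod_eq_pow fun y => p σ y * p σ' y / r y

end Tensorization

section Gaussian

variable {d : ℕ}

lemma gaussI_pos (μ x : Fin d → ℝ) : 0 < gaussI μ x := by
  unfold gaussI; positivity

lemma gaussI_eq_prod_gaussianPDFReal (μ x : Fin d → ℝ) :
    gaussI μ x = ∏ i, gaussianPDFReal (μ i) 1 (x i) := by
  simp only [gaussI, gaussianPDFReal, NNReal.coe_one, mul_one, Finset.prod_mul_distrib,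
    Finset.prod_const, Finset.card_univ, Fintype.card_fin, ← Real.exp_sum, Finset.mul_sum]
  congr 1
  · rw [sqrt_eq_rpow, ← rpow_neg_one, ← rpow_mul (by positivity), ← rpow_natCast,
      ← rpow_mul (by positivity)]
    congr 1; ring
  · congr 1; exact Finset.sum_congr rfl fun i _ => by ring

lemma integrable_gaussI (μ : Fin d → ℝ) : Integrable (gaussI μ) := by
  simp_rw [funext (gaussI_eq_prod_gaussianPDFReal μ)]
  exact Integrable.fintype_prod fun i => integrable_gaussianPDFReal (μ i) 1

lemma integral_gaussI (μ : Fin d → ℝ) : ∫ x, gaussI μ x = 1 := by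
  simp_rw [gaussI_eq_prod_gaussianPDFReal μ]
  rw [volume_pi, integral_fintype_prod_eq_prod (f := fun i => gaussianPDFReal (μ i) 1)]
  simp [integral_gaussianPDFReal_eq_one]

lemma gaussI_mul_gaussI_div (a b x : Fin d → ℝ) :
    gaussI a x * gaussI b x / gaussI 0 x = exp (a ⬝ᵥ b) * gaussI (a + b) x := by
  rw [div_eq_iff (gaussI_pos 0 x).ne']
  simp only [gaussI, mul_mul_mul_comm _ (exp _), mul_left_comm (exp _), ← exp_add]
  congr 2
  simp only [dotProduct, Finset.mul_sum, ← Finset.sum_add_distrib]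
  exact Finset.sum_congr rfl fun i _ => by simp only [Pi.add_apply, Pi.zero_apply]; ring

section Mixture

variable {ι : Type*} (s : Finset ι) (w w' : ι → ℝ) (m m' : ι → Fin d → ℝ)

noncomputable def gaussMixture (x : Fin d → ℝ) : ℝ :=
  ∑ j ∈ s, w j * gaussI (m j) x

lemma gaussMixture_mul_div_eq (x : Fin d → ℝ) :
    gaussMixture s w m x * gaussMixture s w' m' x / gaussI 0 x =
      ∑ j ∈ s, ∑ k ∈ s, w j * w' k * exp (m j ⬝ᵥ m' k) * gaussI (m j + m' k) x := by
  rw [gaussMixture, gaussMixture, Finset.sum_mul_sum, Finset.sum_div]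
  refine Finset.sum_congr rfl fun j _ => ?_
  rw [Finset.sum_div]
  refine Finset.sum_congr rfl fun k _ => ?_
  rw [mul_mul_mul_comm, mul_div_assoc, gaussI_mul_gaussI_div]
  ring

lemma integrable_gaussMixture_mul_div :
    Integrable fun x => gaussMixture s w m x * gaussMixture s w' m' x / gaussI 0 x := by
  simp_rw [gaussMixture_mul_div_eq]
  exact integrable_finsetSum _ fun j _ => integrable_finsetSum _ fun k _ =>
    (integrable_gaussI _).const_mul _

lemma integral_gaussMixture_mul_div :
    ∫ x, gaussMixture s w m x * gaussMixture s w' m' x / gaussI 0 x =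
      ∑ j ∈ s, ∑ k ∈ s, w j * w' k * exp (m j ⬝ᵥ m' k) := by
  simp_rw [gaussMixture_mul_div_eq]
  rw [integral_finsetSum _ fun j _ => integrable_finsetSum _ fun k _ =>
    (integrable_gaussI _).const_mul _]
  refine Finset.sum_congr rfl fun j _ => ?_
  rw [integral_finsetSum _ fun k _ => (integrable_gaussI _).const_mul _]
  simp_rw [integral_const_mul, integral_gaussI, mul_one]

end Mixture

section Huber

variable {ε : ℝ}

lemma exp_mul_le_of_abs_le_one {u : ℝ} (hu : |u| ≤ 1) (y : ℝ) :
    exp (u * y) ≤ (1 + u) / 2 * exp y + (1 - u) / 2 * exp (-y) := by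
  obtain ⟨hu₁, hu₂⟩ := abs_le.mp hu
  have h := convexOn_exp.2 (Set.mem_univ y) (Set.mem_univ (-y))
    (by linarith : (0 : ℝ) ≤ (1 + u) / 2) (by linarith : (0 : ℝ) ≤ (1 - u) / 2) (by ring)
  simp only [smul_eq_mul] at h
  rwa [show (1 + u) / 2 * y + (1 - u) / 2 * -y = u * y by ring] at h

/-- Hoeffding's lemma for the centred law on `{ε, -(1 - ε)}`: both exponentials lie below
the chord of `exp` over `[-z, z]`, and the chords average to `cosh z`. -/
lemma one_sub_mul_exp_add_mul_exp_le (hε₀ : 0 ≤ ε) (hε₁ : ε ≤ 1) (z : ℝ) :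
    (1 - ε) * exp (ε * z) + ε * exp (-(1 - ε) * z) ≤ exp (z ^ 2 / 2) := by
  have h₁ := exp_mul_le_of_abs_le_one (u := ε) (abs_le.mpr ⟨by linarith, hε₁⟩) z
  have h₂ := exp_mul_le_of_abs_le_one (u := -(1 - ε)) (abs_le.mpr ⟨by linarith, by linarith⟩) z
  have hcosh := cosh_le_exp_half_sq z
  rw [cosh_eq] at hcosh
  nlinarith [mul_le_mul_of_nonneg_left h₁ (by linarith : (0 : ℝ) ≤ 1 - ε),
    mul_le_mul_of_nonneg_left h₂ hε₀]

/-- The moment generating function of `(1 - ε) δ_1 + ε δ_{-(1-ε)/ε}`. -/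
noncomputable def huberMGF (ε y : ℝ) : ℝ :=
  (1 - ε) * exp y + ε * exp (-((1 - ε) / ε) * y)

lemma huberMGF_le (hε₀ : 0 < ε) (hε₁ : ε ≤ 1) (y : ℝ) :
    huberMGF ε y ≤ exp (y ^ 2 / (2 * ε ^ 2)) := by
  calc huberMGF ε y = (1 - ε) * exp (ε * (y / ε)) + ε * exp (-(1 - ε) * (y / ε)) := by
        rw [huberMGF, mul_div_cancel₀ _ hε₀.ne', neg_mul, neg_mul, div_mul_eq_mul_div,
          mul_div_assoc]
    _ ≤ exp ((y / ε) ^ 2 / 2) := one_sub_mul_exp_add_mul_exp_le hε₀.le hε₁ _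
    _ = exp (y ^ 2 / (2 * ε ^ 2)) := by rw [div_pow, div_div, mul_comm]

noncomputable def huberGauss (ε : ℝ) (m x : Fin d → ℝ) : ℝ :=
  (1 - ε) * gaussI m x + ε * gaussI (-((1 - ε) / ε) • m) x

lemma huberGauss_nonneg (hε₀ : 0 ≤ ε) (hε₁ : ε ≤ 1) (m x : Fin d → ℝ) :
    0 ≤ huberGauss ε m x := by
  unfold huberGauss
  have := gaussI_pos m x
  have := gaussI_pos (-((1 - ε) / ε) • m) x
  have : 0 ≤ 1 - ε := by linarith
  positivity

lemma huberGauss_eq_gaussMixture (ε : ℝ) (m : Fin d → ℝ) :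
    huberGauss ε m = gaussMixture Finset.univ ![1 - ε, ε] ![m, -((1 - ε) / ε) • m] := by
  ext x
  simp [huberGauss, gaussMixture, Fin.sum_univ_two]

lemma integrable_huberGauss_mul_div (ε : ℝ) (m m' : Fin d → ℝ) :
    Integrable fun x => huberGauss ε m x * huberGauss ε m' x / gaussI 0 x := by
  rw [huberGauss_eq_gaussMixture, huberGauss_eq_gaussMixture]
  exact integrable_gaussMixture_mul_div _ _ _ _ _

lemma integral_huberGauss_mul_div (ε : ℝ) (m m' : Fin d → ℝ) :
    ∫ x, huberGauss ε m x * huberGauss ε m' x / gaussI 0 x =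
      (1 - ε) * huberMGF ε (m ⬝ᵥ m') + ε * huberMGF ε (-((1 - ε) / ε) * (m ⬝ᵥ m')) := by
  rw [huberGauss_eq_gaussMixture, huberGauss_eq_gaussMixture, integral_gaussMixture_mul_div]
  simp only [Fin.sum_univ_two, Matrix.cons_val_zero, Matrix.cons_val_one, Matrix.cons_val_fin_one,
    neg_smul, dotProduct_neg, neg_dotProduct, dotProduct_smul, smul_dotProduct, smul_eq_mul,
    mul_neg, neg_neg, neg_mul, huberMGF]
  ring

lemma integral_huberGauss_mul_div_le (hε₀ : 0 < ε) (hε₁ : ε ≤ 1) (m m' : Fin d → ℝ) :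
    ∫ x, huberGauss ε m x * huberGauss ε m' x / gaussI 0 x ≤ exp ((m ⬝ᵥ m') ^ 2 / ε ^ 4) := by
  set t := m ⬝ᵥ m'
  have hε₂ : ε ^ 2 ≤ 1 := pow_le_one₀ hε₀.le hε₁
  have h₁ : t ^ 2 / (2 * ε ^ 2) ≤ t ^ 2 / ε ^ 4 := by
    gcongr; nlinarith
  have h₂ : (-((1 - ε) / ε) * t) ^ 2 / (2 * ε ^ 2) ≤ t ^ 2 / ε ^ 4 := by
    rw [show (-((1 - ε) / ε) * t) ^ 2 / (2 * ε ^ 2) = (1 - ε) ^ 2 * t ^ 2 / (2 * ε ^ 4) by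
      field_simp]
    rw [div_le_div_iff₀ (by positivity) (by positivity)]
    have : (1 - ε) ^ 2 ≤ 2 := by nlinarith
    nlinarith [mul_le_mul_of_nonneg_right this (by positivity : 0 ≤ t ^ 2 * ε ^ 4)]
  calc ∫ x, huberGauss ε m x * huberGauss ε m' x / gaussI 0 x
      ≤ (1 - ε) * exp (t ^ 2 / (2 * ε ^ 2))
          + ε * exp ((-((1 - ε) / ε) * t) ^ 2 / (2 * ε ^ 2)) := by
        rw [integral_huberGauss_mul_div]
        gcongr <;> exact huberMGF_le hε₀ hε₁ _
    _ ≤ (1 - ε) * exp (t ^ 2 / ε ^ 4) + ε * exp (t ^ 2 / ε ^ 4) := by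
        gcongr
    _ = exp (t ^ 2 / ε ^ 4) := by ring

end Huber

end Gaussian

theorem stmt6_general {d n : ℕ}
    (ε : ℝ) (hε : ε ∈ Set.Ioc 0 (1 / 3 : ℝ)) (γ : ℝ)
    (Θ : Finset (Fin d → Fin 3))
    (θ : (Fin d → Fin 3) → Fin d → ℝ)
    (q : (Fin d → Fin 3) → (Fin d → ℝ) → ℝ)
    (hq : ∀ σ x, q σ x =
      (1 - ε) * gaussI (γ • θ σ) x + ε * gaussI ((-((1 - ε) / ε) * γ) • θ σ) x) :
    ∫ x : Fin n → Fin d → ℝ,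
        ((1 / (Θ.card : ℝ)) * ∑ σ ∈ Θ, ∏ i, q σ (x i)) ^ 2 / ∏ i, gaussI 0 (x i)
      ≤ (1 / (Θ.card : ℝ) ^ 2) *
          ∑ σ ∈ Θ, ∑ σ' ∈ Θ,
            Real.exp ((n : ℝ) * γ ^ 4 * (∑ i, θ σ i * θ σ' i) ^ 2 / ε ^ 4) := by
  obtain ⟨hε₀, hε₃⟩ := hε
  have hε₁ : ε ≤ 1 := by linarith
  obtain rfl : q = fun σ => huberGauss ε (γ • θ σ) := by
    ext σ x
    rw [hq, huberGauss, smul_smul]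
  rw [integral_sq_sum_prod_div_prod _ _ _ _ fun σ _ σ' _ => integrable_huberGauss_mul_div _ _ _,
    Fintype.card_fin, one_div_pow]
  gcongr with σ _ σ' _
  calc (∫ y, huberGauss ε (γ • θ σ) y * huberGauss ε (γ • θ σ') y / gaussI 0 y) ^ n
      ≤ exp (((γ • θ σ) ⬝ᵥ (γ • θ σ')) ^ 2 / ε ^ 4) ^ n := by
        gcongr
        · exact integral_nonneg fun y => div_nonneg
            (mul_nonneg (huberGauss_nonneg hε₀.le hε₁ _ _) (huberGauss_nonneg hε₀.le hε₁ _ _))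
            (gaussI_pos 0 y).le
        · exact integral_huberGauss_mul_div_le hε₀ hε₁ _ _
    _ = exp (n * γ ^ 4 * (∑ i, θ σ i * θ σ' i) ^ 2 / ε ^ 4) := by
        rw [← exp_nat_mul, smul_dotProduct, dotProduct_smul, smul_eq_mul, smul_eq_mul]
        congr 1
        simp only [dotProduct]
        ring

/-- the Ingster–Suslina bound on the χ² second moment of the mixture of
`n`-fold products of Huber-contaminated sparse Gaussians. Vectors of `Θ`, with entries in
`{−1/√s, 0, 1/√s}` and exactly `s` nonzero coordinates, are encoded by `σ : Fin d → Fin 3`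
via `θ σ i = ((σ i : ℝ) − 1)/√s` (so `σ i ≠ 1` marks the nonzero coordinates). -/
theorem stmt6 {d s n : ℕ} (hd : 1 ≤ d) (hs1 : 1 ≤ s) (hsd : s ≤ d) (hn : 1 ≤ n)
    (ε : ℝ) (hε : ε ∈ Set.Ioc 0 (1 / 3 : ℝ)) (γ : ℝ) (hγ : 0 < γ)
    (Θ : Finset (Fin d → Fin 3))
    (hΘ : Θ = Finset.univ.filter
      (fun σ => (Finset.univ.filter (fun i => σ i ≠ 1)).card = s))
    (θ : (Fin d → Fin 3) → Fin d → ℝ)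
    (hθ : ∀ σ i, θ σ i = (((σ i : ℕ) : ℝ) - 1) / Real.sqrt s)
    (q : (Fin d → Fin 3) → (Fin d → ℝ) → ℝ)
    (hq : ∀ σ x, q σ x =
      (1 - ε) * gaussI (γ • θ σ) x + ε * gaussI ((-((1 - ε) / ε) * γ) • θ σ) x) :
    ∫ x : Fin n → Fin d → ℝ,
        ((1 / (Θ.card : ℝ)) * ∑ σ ∈ Θ, ∏ i, q σ (x i)) ^ 2 / ∏ i, gaussI 0 (x i)
      ≤ (1 / (Θ.card : ℝ) ^ 2) *
          ∑ σ ∈ Θ, ∑ σ' ∈ Θ,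
            Real.exp ((n : ℝ) * γ ^ 4 * (∑ i, θ σ i * θ σ' i) ^ 2 / ε ^ 4) :=
  stmt6_general ε hε γ Θ θ q hq
end

section
/- Let 0 < q < 2, let ε > 0, s > 0, d ≥ 1, and let μ ∈ ℝ^d satisfy ‖μ‖_q ≤ s. Assume ε² ≤ s² (so the set below is nonempty) and let m := max{ u ∈ {1,…,d} : ε² u^{2/q − 1} ≤ s² }. Then there exists μ' ∈ ℝ^d such that: (i) μ' has at most m nonzero coordinates; (ii) every coordinate of μ' is an integer multiple of ε/√d; and (iii) ‖μ' − μ‖₂ ≤ √2 · ε. -/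
/-! Keep the `m` coordinates of largest modulus and round them to the grid `(ε / √d) ℤ`; this
costs at most `m (ε / √d)² / 4 ≤ ε² / 4`. Every dropped coordinate satisfies
`(m + 1) |μᵢ|^q ≤ ‖μ‖_q^q`, so writing `μᵢ² = (|μᵢ|^q)^(2/q - 1) |μᵢ|^q` bounds the dropped mass by
`‖μ‖_q² / (m + 1)^(2/q - 1)`, which is below `ε²` by the maximality of `m`. -/

open Finset

noncomputable def roundToMultiple (δ x : ℝ) : ℝ := round (x / δ) * δ

lemma sq_roundToMultiple_sub_le (x : ℝ) {δ : ℝ} (hδ : 0 < δ) :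
    (roundToMultiple δ x - x) ^ 2 ≤ (δ / 2) ^ 2 := by
  have hx : |roundToMultiple δ x - x| ≤ δ / 2 := by
    rw [roundToMultiple,
      show round (x / δ) * δ - x = (round (x / δ) - x / δ) * δ by field_simp, abs_mul,
      abs_of_pos hδ, abs_sub_comm]
    nlinarith [abs_sub_round (x / δ)]
  rw [← sq_abs]
  exact pow_le_pow_left₀ (abs_nonneg _) hx 2

lemma sum_sq_roundToMultiple_sub_le {d : ℕ} (μ : Fin d → ℝ) {ε : ℝ} (hε : 0 < ε)
    (S : Finset (Fin d)) :
    ∑ i ∈ S, (roundToMultiple (ε / √d) (μ i) - μ i) ^ 2 ≤ ε ^ 2 / 4 := by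
  obtain rfl | hd := d.eq_zero_or_pos
  · rw [Subsingleton.elim S ∅, sum_empty]
    positivity
  calc ∑ i ∈ S, (roundToMultiple (ε / √d) (μ i) - μ i) ^ 2
      ≤ ∑ _i ∈ S, (ε / √d / 2) ^ 2 :=
        sum_le_sum fun i _ => sq_roundToMultiple_sub_le (μ i) (by positivity)
    _ = S.card * (ε / √d / 2) ^ 2 := by rw [sum_const, nsmul_eq_mul]
    _ ≤ d * (ε / √d / 2) ^ 2 := by
        gcongr
        simpa using S.card_le_univ
    _ = ε ^ 2 / 4 := by
        rw [div_pow, div_pow, Real.sq_sqrt (Nat.cast_nonneg d)]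
        field_simp
        norm_num

lemma exists_card_eq_forall_notMem_le_mem {ι α : Type*} [Fintype ι] [DecidableEq ι] [AddCommGroup α]
    [LinearOrder α] [IsOrderedAddMonoid α] (f : ι → α) {m : ℕ} (hm : m ≤ Fintype.card ι) :
    ∃ S : Finset ι, S.card = m ∧ ∀ i ∉ S, ∀ j ∈ S, f i ≤ f j := by
  obtain ⟨S, hSmem, hSmax⟩ := (univ.powersetCard m).exists_max_image (fun T => ∑ j ∈ T, f j)
    (powersetCard_nonempty.mpr (by simpa using hm))
  have hSm : S.card = m := mem_powersetCard_univ.mp hSmem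
  refine ⟨S, hSm, fun i hi j hj => ?_⟩
  have hij : i ∉ S.erase j := fun h => hi (mem_of_mem_erase h)
  have hswap := hSmax (insert i (S.erase j)) <| by
    rw [mem_powersetCard_univ, card_insert_of_notMem hij, card_erase_of_mem hj, hSm]
    have := card_pos.mpr ⟨j, hj⟩
    omega
  rw [sum_insert hij, ← add_sum_erase S f hj] at hswap
  simpa using hswap

lemma card_add_one_mul_le_sum {ι : Type*} [Fintype ι] [DecidableEq ι] {f : ι → ℝ}
    (hf : ∀ i, 0 ≤ f i) {S : Finset ι} (hS : ∀ i ∉ S, ∀ j ∈ S, f i ≤ f j) {i : ι} (hi : i ∉ S) :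
    (S.card + 1) * f i ≤ ∑ j, f j :=
  calc (S.card + 1) * f i = ∑ _j ∈ insert i S, f i := by
        rw [sum_const, card_insert_of_notMem hi, nsmul_eq_mul, Nat.cast_succ]
    _ ≤ ∑ j ∈ insert i S, f j := sum_le_sum fun j hj => by
        rcases mem_insert.mp hj with rfl | hj
        exacts [le_rfl, hS i hi j hj]
    _ ≤ ∑ j, f j := sum_le_sum_of_subset_of_nonneg (subset_univ _) fun j _ _ => hf j

lemma sq_eq_rpow_mul_rpow (x : ℝ) {q : ℝ} (hq : 0 < q) :
    x ^ 2 = (|x| ^ q) ^ (2 / q - 1) * |x| ^ q := by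
  have hexp : q * (2 / q - 1) + q = (2 : ℕ) := by field_simp; ring
  rw [← Real.rpow_mul (abs_nonneg x), ← Real.rpow_add' (abs_nonneg x) (by simp [hexp]), hexp,
    Real.rpow_natCast, sq_abs]

lemma sum_sq_le_rpow_mul_sum_rpow {ι : Type*} (T : Finset ι) (f : ι → ℝ) {q t : ℝ}
    (hq0 : 0 < q) (hq2 : q ≤ 2) (ht : ∀ i ∈ T, |f i| ^ q ≤ t) :
    ∑ i ∈ T, f i ^ 2 ≤ t ^ (2 / q - 1) * ∑ i ∈ T, |f i| ^ q := by
  have hr : 0 ≤ 2 / q - 1 := by rw [sub_nonneg, le_div_iff₀ hq0]; linarith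
  rw [mul_sum]
  refine sum_le_sum fun i hi => ?_
  rw [sq_eq_rpow_mul_rpow (f i) hq0]
  exact mul_le_mul_of_nonneg_right (Real.rpow_le_rpow (by positivity) (ht i hi) hr) (by positivity)

lemma sum_compl_sq_lt_of_forall_notMem_le {ι : Type*} [Fintype ι] [DecidableEq ι] (μ : ι → ℝ)
    {q ε s : ℝ} (hq0 : 0 < q) (hq2 : q ≤ 2) (hμ : (∑ i, |μ i| ^ q) ^ (1 / q) ≤ s) {S : Finset ι}
    (hS : ∀ i ∉ S, ∀ j ∈ S, |μ i| ^ q ≤ |μ j| ^ q)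
    (hsε : s ^ 2 < ε ^ 2 * ((S.card : ℝ) + 1) ^ (2 / q - 1)) :
    ∑ i ∈ Sᶜ, μ i ^ 2 < ε ^ 2 := by
  set A := ∑ i, |μ i| ^ q
  set c : ℝ := S.card + 1
  have hA : 0 ≤ A := sum_nonneg fun i _ => by positivity
  have hc : 0 < c := by positivity
  have hdropped : ∀ i ∈ Sᶜ, |μ i| ^ q ≤ A / c := fun i hi => by
    rw [le_div_iff₀' hc]
    exact card_add_one_mul_le_sum (fun j => by positivity) hS (mem_compl.mp hi)
  have hmass : A ^ (2 / q) ≤ s ^ 2 := by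
    rw [show 2 / q = 1 / q * (2 : ℕ) by ring, Real.rpow_mul_natCast hA]
    exact pow_le_pow_left₀ (by positivity) hμ 2
  calc ∑ i ∈ Sᶜ, μ i ^ 2 ≤ (A / c) ^ (2 / q - 1) * ∑ i ∈ Sᶜ, |μ i| ^ q :=
        sum_sq_le_rpow_mul_sum_rpow _ _ hq0 hq2 hdropped
    _ ≤ (A / c) ^ (2 / q - 1) * A := by
        gcongr
        exact sum_le_sum_of_subset_of_nonneg (subset_univ _) fun j _ _ => by positivity
    _ = A ^ (2 / q) / c ^ (2 / q - 1) := by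
        rw [Real.div_rpow hA hc.le, div_mul_eq_mul_div,
          ← Real.rpow_add_one' hA (by simp; positivity), sub_add_cancel]
    _ < ε ^ 2 := by
        rw [div_lt_iff₀ (by positivity)]
        exact hmass.trans_lt hsε

open scoped Classical in
theorem stmt11_general (q : ℝ) (hq0 : 0 < q) (hq2 : q < 2) (ε s : ℝ) (hε : 0 < ε)
    (d : ℕ) (μ : Fin d → ℝ)
    (hμ : (∑ i, |μ i| ^ q) ^ (1 / q) ≤ s)
    (m : ℕ) (hmd : m ≤ d)
    (hm_max : ∀ u : ℕ, 1 ≤ u → u ≤ d → ε ^ 2 * (u : ℝ) ^ (2 / q - 1) ≤ s ^ 2 → u ≤ m) :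
    ∃ μ' : Fin d → ℝ,
      (Finset.univ.filter fun i => μ' i ≠ 0).card ≤ m ∧
      (∀ i, ∃ k : ℤ, μ' i = (k : ℝ) * (ε / Real.sqrt d)) ∧
      Real.sqrt (∑ i, (μ' i - μ i) ^ 2) ≤ Real.sqrt 2 * ε := by
  obtain ⟨S, hSm, hS⟩ :=
    exists_card_eq_forall_notMem_le_mem (fun i => |μ i| ^ q) (by simpa using hmd)
  refine ⟨fun i => if i ∈ S then roundToMultiple (ε / √d) (μ i) else 0, ?_, fun i => ?_, ?_⟩
  · refine (card_le_card fun i hi => ?_).trans hSm.le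
    by_contra h
    exact (mem_filter.mp hi).2 (if_neg h)
  · by_cases hi : i ∈ S
    exacts [⟨_, if_pos hi⟩, ⟨0, by simp [hi]⟩]
  have hkept := sum_sq_roundToMultiple_sub_le μ hε S
  have hdropped : ∑ i ∈ Sᶜ, μ i ^ 2 ≤ ε ^ 2 := by
    rcases hmd.lt_or_eq with hlt | rfl
    · have hsε : s ^ 2 < ε ^ 2 * ((S.card : ℝ) + 1) ^ (2 / q - 1) := by
        by_contra! h
        have := hm_max (m + 1) (by omega) hlt (by simpa [hSm] using h)
        omega
      exact (sum_compl_sq_lt_of_forall_notMem_le μ hq0 hq2.le hμ hS hsε).le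
    · rw [eq_univ_of_card S (by simpa using hSm), compl_univ, sum_empty]
      positivity
  have hsplit : ∑ i, ((if i ∈ S then roundToMultiple (ε / √d) (μ i) else 0) - μ i) ^ 2 =
      ∑ i ∈ S, (roundToMultiple (ε / √d) (μ i) - μ i) ^ 2 + ∑ i ∈ Sᶜ, μ i ^ 2 := by
    rw [← sum_add_sum_compl S]
    congr 1 <;> refine sum_congr rfl fun i hi => ?_
    · rw [if_pos hi]
    · rw [if_neg (mem_compl.mp hi), zero_sub, neg_sq]
  rw [Real.sqrt_le_iff, mul_pow, Real.sq_sqrt zero_le_two, hsplit]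
  exact ⟨by positivity, by linarith [sq_nonneg ε]⟩

/-- covering/approximation step for robust `ℓ_q`-sparse mean estimation.
If `‖μ‖_q ≤ s` and `m` is the effective sparsity `max{u ∈ [d] : ε² u^{2/q−1} ≤ s²}`, then
there is an `m`-sparse vector `μ'` whose coordinates are integer multiples of `ε/√d`
with `‖μ' − μ‖₂ ≤ √2 ε`. -/
theorem stmt11 (q : ℝ) (hq0 : 0 < q) (hq2 : q < 2) (ε s : ℝ) (hε : 0 < ε) (hs : 0 < s)
    (d : ℕ) (hd : 1 ≤ d) (μ : Fin d → ℝ)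
    (hμ : (∑ i, |μ i| ^ q) ^ (1 / q) ≤ s)
    (hεs : ε ^ 2 ≤ s ^ 2)
    (m : ℕ) (hm1 : 1 ≤ m) (hmd : m ≤ d)
    (hm_mem : ε ^ 2 * (m : ℝ) ^ (2 / q - 1) ≤ s ^ 2)
    (hm_max : ∀ u : ℕ, 1 ≤ u → u ≤ d → ε ^ 2 * (u : ℝ) ^ (2 / q - 1) ≤ s ^ 2 → u ≤ m) :
    ∃ μ' : Fin d → ℝ,
      (Finset.univ.filter fun i => μ' i ≠ 0).card ≤ m ∧
      (∀ i, ∃ k : ℤ, μ' i = (k : ℝ) * (ε / Real.sqrt d)) ∧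
      Real.sqrt (∑ i, (μ' i - μ i) ^ 2) ≤ Real.sqrt 2 * ε :=
  stmt11_general q hq0 hq2 ε s hε d μ hμ m hmd hm_max
end
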